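/- arXiv:2406.13315 — 6 statements merged into one kernel-verified Lean document; each statement's English description precedes it below -/
import Mathlib

section
/- For every index i < n there exists a symmetric matrix M_i ∈ Matrix (Fin n) (Fin n) (ZMod 2) which is invertible over ZMod 2 such that for all a, c ∈ F the i-th coordinate of the field product a * c is the bilinear form (a * c)_i = ∑_{r<n} ∑_{t<n} a_r · (M_i)_{r,t} · c_t. -/
/-- For every index `i < n` there exists a symmetric matrix
`M_i : Matrix (Fin n) (Fin n) (ZMod 2)`, invertible over `ZMod 2`, such that for all
`a c : F` the `i`-th coordinate of `a * c` is the bilinear form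
`(a*c)_i = ∑_{r<n} ∑_{t<n} a_r ⬝ (M_i)_{r,t} ⬝ c_t`. -/
theorem stmt_0 (n : ℕ) (hn : 1 ≤ n) (F : Type*) [Field F] [Fintype F]
    [Algebra (ZMod 2) F] (hF : Fintype.card F = 2 ^ n)
    (b : Module.Basis (Fin n) (ZMod 2) F) (i : Fin n) :
    ∃ M : Matrix (Fin n) (Fin n) (ZMod 2), M.IsSymm ∧ IsUnit M ∧
      ∀ a c : F, b.repr (a * c) i =
        ∑ r : Fin n, ∑ t : Fin n, b.repr a r * M r t * b.repr c t := by
  set M : Matrix (Fin n) (Fin n) (ZMod 2) :=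
    fun r t => b.repr (b r * b t) i with hM
  have key : ∀ a c : F, b.repr (a * c) i =
      ∑ r : Fin n, ∑ t : Fin n, b.repr a r * M r t * b.repr c t := by
    intro a c
    conv_lhs => rw [← b.sum_repr a, ← b.sum_repr c]
    rw [Finset.sum_mul_sum]
    rw [map_sum]
    rw [Finsupp.finset_sum_apply]
    refine Finset.sum_congr rfl fun r _ => ?_
    rw [map_sum, Finsupp.finset_sum_apply]
    refine Finset.sum_congr rfl fun t _ => ?_
    rw [Algebra.smul_mul_assoc, Algebra.mul_smul_comm, map_smul, map_smul,
      Finsupp.smul_apply, Finsupp.smul_apply, smul_eq_mul, smul_eq_mul]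
    simp only [hM]
    ring
  refine ⟨M, ?_, ?_, key⟩
  · ext r t
    simp [Matrix.transpose, hM, mul_comm]
  · rw [Matrix.isUnit_iff_isUnit_det, isUnit_iff_ne_zero]
    intro hdet
    obtain ⟨x, hx, hMx⟩ := (Matrix.exists_mulVec_eq_zero_iff.mpr hdet)
    set a : F := b.repr.symm (Finsupp.equivFunOnFinite.symm x) with ha
    have hra : ∀ r, b.repr a r = x r := by
      intro r; simp [ha]
    have ha0 : a ≠ 0 := by
      intro h
      apply hx
      ext r
      have := hra r
      rw [h] at this
      simpa using this.symm
    have hzero : ∀ c : F, b.repr (a * c) i = 0 := by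
      intro c
      rw [key]
      rw [Finset.sum_comm]
      have : ∀ t : Fin n, ∑ r : Fin n, b.repr a r * M r t * b.repr c t = 0 := by
        intro t
        rw [← Finset.sum_mul]
        have : ∑ r : Fin n, b.repr a r * M r t = 0 := by
          have := congrFun hMx t
          simp only [Matrix.mulVec, dotProduct, Pi.zero_apply] at this
          rw [← this]
          refine Finset.sum_congr rfl fun r _ => ?_
          rw [hra, mul_comm]
          congr 1
          simp only [hM]
          rw [mul_comm (b r) (b t)]
        rw [this, zero_mul]
      simp [this]
    have := hzero (a⁻¹ * (b i))
    rw [← mul_assoc, mul_inv_cancel₀ ha0, one_mul] at this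
    simp [Module.Basis.repr_self] at this
end

section
/- For every a ∈ F there exists a unique tuple a' : Fin n → ZMod 2 such that for all k ∈ F one has (k*a)_0 = ∑_{i<n} k_i · a'_i in ZMod 2; consequently the phase operator factorizes over the qubit coordinates: (Ẑ_a)_{k,k} = ∏_{i<n} (-1)^{(k_i · a'_i).val} for all k ∈ F (i.e. Ẑ_a is a tensor product of single-qubit Pauli Z operators). -/
variable {n : ℕ} [NeZero n] {F : Type*} [Field F] [Fintype F] [DecidableEq F]
  [Algebra (ZMod 2) F]

/-- The phase operator `Ẑ_a`: the diagonal matrix with `(Ẑ_a)_{k,k} = (-1)^{(k*a)_0}`. -/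
noncomputable def phaseZ (b : Module.Basis (Fin n) (ZMod 2) F) (a : F) : Matrix F F ℂ :=
  Matrix.diagonal fun k => (-1 : ℂ) ^ ((b.repr (k * a)) 0).val

lemma neg_one_pow_sum {ι : Type*} (s : Finset ι) (v : ι → ZMod 2) :
    (-1 : ℂ) ^ (∑ i ∈ s, v i).val = ∏ i ∈ s, (-1 : ℂ) ^ (v i).val := by
  classical
  induction s using Finset.induction with
  | empty => simp
  | insert _ _ h ih =>
    rw [Finset.sum_insert h, Finset.prod_insert h, ← ih]
    have : ∀ x y : ZMod 2, (-1 : ℂ) ^ (x + y).val = (-1) ^ x.val * (-1) ^ y.val := by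
      intro x y
      rw [ZMod.val_add, ← pow_add, ← Nat.mod_add_div (x.val + y.val) 2, pow_add, pow_mul]
      norm_num
    exact this _ _

lemma key (b : Module.Basis (Fin n) (ZMod 2) F) (a : F) (k : F) :
    (b.repr (k * a)) 0 = ∑ i : Fin n, (b.repr k) i * (b.repr (b i * a)) 0 := by
  conv_lhs => rw [← b.sum_repr k]
  rw [Finset.sum_mul, map_sum, Finsupp.finset_sum_apply]
  congr 1; ext i
  rw [smul_mul_assoc, map_smul]
  rfl

/-- For every `a ∈ F` there exists a unique tuple `a' : Fin n → ZMod 2`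
such that for all `k ∈ F` one has `(k*a)_0 = ∑_{i<n} k_i * a'_i` in `ZMod 2`;
consequently the phase operator factorizes over the qubit coordinates:
`(Ẑ_a)_{k,k} = ∏_{i<n} (-1)^{(k_i * a'_i).val}` for all `k ∈ F`. -/
theorem stmt_3 (hF : Fintype.card F = 2 ^ n) (b : Module.Basis (Fin n) (ZMod 2) F) (a : F) :
    (∃! a' : Fin n → ZMod 2,
        ∀ k : F, (b.repr (k * a)) 0 = ∑ i : Fin n, (b.repr k) i * a' i) ∧
    (∀ a' : Fin n → ZMod 2,
        (∀ k : F, (b.repr (k * a)) 0 = ∑ i : Fin n, (b.repr k) i * a' i) →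
        ∀ k : F, phaseZ b a k k =
          ∏ i : Fin n, (-1 : ℂ) ^ (((b.repr k) i * a' i).val)) := by
  constructor
  · refine ⟨fun i => (b.repr (b i * a)) 0, fun k => key b a k, ?_⟩
    intro a' ha'
    funext j
    have := ha' (b j)
    rw [key b a (b j)] at this
    simpa [Module.Basis.repr_self, Finsupp.single_apply, Finset.sum_ite_eq'] using this.symm
  · intro a' ha' k
    rw [phaseZ, Matrix.diagonal_apply_eq, ha' k, neg_one_pow_sum]
end

section
/- For every k ∈ F with k ≠ 0 and every matrix ρ ∈ Matrix F F ℂ: (1/2^n) • ∑_{j ∈ F} S_{j,k} * ρ * S_{j,k} = ∑_{l ∈ F} ρ_{l,l} • E_{l+k, l+k}. -/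
set_option linter.unusedSectionVars false


variable {n : ℕ} [NeZero n] {F : Type*} [Field F] [Fintype F] [DecidableEq F]
  [Algebra (ZMod 2) F]

/-- The shift operator `X̂_a`: `(X̂_a)_{k,l} = 1` if `l = k + a` and `0` otherwise. -/
def shiftX (a : F) : Matrix F F ℂ :=
  fun k l => if l = k + a then 1 else 0

/-- `ν(x) = ∑_{i<n} (x_i).val * 2^i`. -/
noncomputable def nu (b : Module.Basis (Fin n) (ZMod 2) F) (x : F) : ℕ :=
  ∑ i : Fin n, ((b.repr x) i).val * 2 ^ i.val

/-- The phase factor `s_{j,k} := ∏_{0 ≤ r,t < n} I^{ν(j * (k_r • b r) * (k_t • b t))}`. -/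
noncomputable def sFactor (b : Module.Basis (Fin n) (ZMod 2) F) (j k : F) : ℂ :=
  ∏ r : Fin n, ∏ t : Fin n,
    Complex.I ^ nu b (j * ((b.repr k) r • b r) * ((b.repr k) t • b t))

/-- `S_{j,k} := s_{j,k} • (Ẑ_{j*k} * X̂_k)`. -/
noncomputable def Sop (b : Module.Basis (Fin n) (ZMod 2) F) (j k : F) : Matrix F F ℂ :=
  sFactor b j k • (phaseZ b (j * k) * shiftX k)

/-! ### Auxiliary lemmas -/

noncomputable def eps (u : ZMod 2) : ℂ := (-1 : ℂ) ^ u.val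

lemma eps_add (u v : ZMod 2) : eps (u + v) = eps u * eps v := by
  have key : ∀ a b : ZMod 2, (a + b).val % 2 = (a.val + b.val) % 2 := by decide
  unfold eps
  rw [neg_one_pow_eq_pow_mod_two, key, ← neg_one_pow_eq_pow_mod_two, pow_add]

lemma eps_zero : eps 0 = 1 := rfl
lemma eps_one : eps 1 = -1 := by simp [eps, show ZMod.val (1 : ZMod 2) = 1 from rfl]

lemma neg_one_pow_natCast (N : ℕ) : (-1 : ℂ) ^ N = eps (N : ZMod 2) := by
  induction N with
  | zero => simp [eps_zero]
  | succ m ih => rw [pow_succ, ih, Nat.cast_succ, eps_add, eps_one]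

lemma two_eq_zero' : (2 : F) = 0 := by
  have h := map_ofNat (algebraMap (ZMod 2) F) 2
  rw [show ((OfNat.ofNat 2 : ZMod 2)) = 0 by decide, map_zero] at h
  exact h.symm

lemma add_self_zero (x : F) : x + x = 0 := by
  have h2 := two_eq_zero' (F := F)
  have h : x + x = 2 * x := by ring
  rw [h, h2, zero_mul]

lemma eq_iff_add_eq_zero (x y : F) : x = y ↔ x + y = 0 := by
  constructor
  · rintro rfl; exact add_self_zero x
  · intro h
    have := add_self_zero y
    have hx : x + y = y + y := by rw [h, this]
    exact add_right_cancel hx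

/-- cast of `nu` to `ZMod 2` is the 0-th coordinate. -/
lemma nu_cast (b : Module.Basis (Fin n) (ZMod 2) F) (x : F) :
    ((nu b x : ℕ) : ZMod 2) = b.repr x 0 := by
  unfold nu
  push_cast
  rw [Finset.sum_eq_single (0 : Fin n)]
  · simp [ZMod.natCast_val, ZMod.cast_id]
  · intro i _ hi
    have h2 : (2 : ZMod 2) = 0 := by decide
    have hpos : 0 < i.val := by
      rcases Nat.eq_zero_or_pos i.val with h | h
      · exact absurd (Fin.ext h) hi
      · exact h
    rw [h2, zero_pow hpos.ne', mul_zero]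
  · simp

/-- `(-1)^ν x = eps (x₀)` -/
lemma neg_one_pow_nu (b : Module.Basis (Fin n) (ZMod 2) F) (x : F) :
    (-1 : ℂ) ^ nu b x = eps (b.repr x 0) := by
  rw [neg_one_pow_natCast, nu_cast]

lemma phaseZ_apply (b : Module.Basis (Fin n) (ZMod 2) F) (a x : F) :
    (fun k : F => (-1 : ℂ) ^ ((b.repr (k * a)) 0).val) x = eps (b.repr (x * a) 0) := rfl

lemma eps_sum {ι : Type*} (s : Finset ι) (f : ι → ZMod 2) :
    eps (∑ i ∈ s, f i) = ∏ i ∈ s, eps (f i) := by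
  classical
  induction s using Finset.cons_induction with
  | empty => simp [eps_zero]
  | cons a s ha ih => rw [Finset.sum_cons, Finset.prod_cons, eps_add, ih]

lemma charP_F : CharP F 2 := by
  refine ⟨fun x => ?_⟩
  rw [show ((x : ℕ) : F) = algebraMap (ZMod 2) F (x : ZMod 2) from (map_natCast _ x).symm,
    map_eq_zero_iff _ (algebraMap (ZMod 2) F).injective]
  exact ZMod.natCast_eq_zero_iff x 2

/-- symmetric double sums in `ZMod 2` reduce to the diagonal -/
lemma zmod2_double_sum (d : Fin n → Fin n → ZMod 2) (hsymm : ∀ r t, d r t = d t r) :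
    ∑ r : Fin n, ∑ t : Fin n, d r t = ∑ r : Fin n, d r r := by
  classical
  rw [← Finset.sum_product', ← Finset.diag_union_offDiag,
    Finset.sum_union (Finset.disjoint_diag_offDiag _), Finset.sum_diag]
  have hoff : ∑ p ∈ Finset.univ.offDiag, d p.1 p.2 = 0 := by
    refine Finset.sum_involution (fun (p : Fin n × Fin n) _ => p.swap) ?_ ?_ ?_ ?_
    · intro p _
      rw [Prod.fst_swap, Prod.snd_swap, hsymm p.2 p.1]
      exact (by decide : ∀ u : ZMod 2, u + u = 0) _
    · intro p hp _
      rw [Finset.mem_offDiag] at hp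
      intro h
      exact hp.2.2 (congrArg Prod.fst h).symm
    · intro p hp
      rw [Finset.mem_offDiag] at hp ⊢
      exact ⟨Finset.mem_univ _, Finset.mem_univ _, fun h => hp.2.2 h.symm⟩
    · intro p _; exact Prod.swap_swap p
  rw [hoff, add_zero]

/-- the square of the phase factor -/
lemma sFactor_sq (b : Module.Basis (Fin n) (ZMod 2) F) (j k : F) :
    sFactor b j k * sFactor b j k = eps (b.repr (j * k * k) 0) := by
  haveI : CharP F 2 := charP_F
  unfold sFactor
  rw [← Finset.prod_mul_distrib]
  have step1 : ∀ r : Fin n,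
      (∏ t : Fin n, Complex.I ^ nu b (j * (b.repr k r • b r) * (b.repr k t • b t))) *
      (∏ t : Fin n, Complex.I ^ nu b (j * (b.repr k r • b r) * (b.repr k t • b t))) =
      ∏ t : Fin n, eps (b.repr (j * (b.repr k r • b r) * (b.repr k t • b t)) 0) := by
    intro r
    rw [← Finset.prod_mul_distrib]
    refine Finset.prod_congr rfl fun t _ => ?_
    rw [← pow_add, ← two_mul, pow_mul, Complex.I_sq, neg_one_pow_nu]
  rw [Finset.prod_congr rfl fun r _ => step1 r]
  rw [← Finset.prod_congr rfl fun r _ => eps_sum Finset.univ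
      (fun t => b.repr (j * (b.repr k r • b r) * (b.repr k t • b t)) 0),
    ← eps_sum]
  congr 1
  have hsy : ∀ r t : Fin n, b.repr (j * (b.repr k r • b r) * (b.repr k t • b t)) 0
      = b.repr (j * (b.repr k t • b t) * (b.repr k r • b r)) 0 := fun r t => by
    rw [mul_right_comm]
  rw [zmod2_double_sum (fun r t => b.repr (j * (b.repr k r • b r) * (b.repr k t • b t)) 0) hsy]
  have hsq : ∀ r : Fin n,
      j * (b.repr k r • b r) * (b.repr k r • b r) = b.repr k r • (j * (b r * b r)) := by
    intro r
    rw [mul_assoc, smul_mul_smul_comm]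
    have : b.repr k r * b.repr k r = b.repr k r := by
      have h : ∀ u : ZMod 2, u * u = u := by decide
      exact h _
    rw [this, mul_smul_comm]
  simp_rw [hsq]
  have : ∑ r : Fin n, b.repr (b.repr k r • (j * (b r * b r))) 0
      = b.repr (∑ r : Fin n, b.repr k r • (j * (b r * b r))) 0 := by
    rw [map_sum, Finset.sum_apply']
  rw [this]
  congr 2
  haveI : ExpChar F 2 := .prime Nat.prime_two
  have key : ∑ r : Fin n, b.repr k r • (b r * b r) = k * k := by
    calc ∑ r : Fin n, b.repr k r • (b r * b r)
        = ∑ r : Fin n, (b.repr k r • b r) * (b.repr k r • b r) := by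
          refine Finset.sum_congr rfl fun r _ => ?_
          rw [smul_mul_smul_comm]
          have h : ∀ u : ZMod 2, u * u = u := by decide
          rw [h]
      _ = ∑ r : Fin n, (b.repr k r • b r) ^ 2 := by
          refine Finset.sum_congr rfl fun r _ => (sq _).symm
      _ = (∑ r : Fin n, b.repr k r • b r) ^ 2 := (sum_pow_char 2 Finset.univ _).symm
      _ = k ^ 2 := by rw [Module.Basis.sum_repr]
      _ = k * k := sq k
  calc ∑ r : Fin n, b.repr k r • (j * (b r * b r))
      = ∑ r : Fin n, j * (b.repr k r • (b r * b r)) := by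
        refine Finset.sum_congr rfl fun r _ => (mul_smul_comm _ _ _).symm
    _ = j * ∑ r : Fin n, b.repr k r • (b r * b r) := (Finset.mul_sum _ _ _).symm
    _ = j * (k * k) := by rw [key]
    _ = j * k * k := (mul_assoc _ _ _).symm

/-- character sum over F of eps(x₀) is zero -/
lemma sum_eps_zero (b : Module.Basis (Fin n) (ZMod 2) F) :
    ∑ x : F, eps (b.repr x 0) = 0 := by
  have hre : ∑ x : F, eps (b.repr x 0) = ∑ x : F, eps (b.repr (x + b 0) 0) :=
    (Fintype.sum_equiv (Equiv.addRight (b 0)) _ _ (fun x => rfl)).symm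
  have hstep : ∀ x : F, eps (b.repr (x + b 0) 0) = - eps (b.repr x 0) := by
    intro x
    rw [map_add, Finsupp.add_apply, eps_add]
    simp [Module.Basis.repr_self, eps_one]
  rw [Finset.sum_congr rfl (fun x _ => hstep x), Finset.sum_neg_distrib] at hre
  have h2 : (∑ x : F, eps (b.repr x 0)) + (∑ x : F, eps (b.repr x 0)) = 0 := by
    linear_combination hre
  exact add_self_eq_zero.mp h2

lemma sum_eps_mul_zero (b : Module.Basis (Fin n) (ZMod 2) F) (c : F) (hc : c ≠ 0) :
    ∑ j : F, eps (b.repr (j * c) 0) = 0 := by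
  rw [← sum_eps_zero b]
  exact Fintype.sum_equiv (Equiv.mulRight₀ c hc) _ _ (fun j => rfl)

/-- For every `k ∈ F` with `k ≠ 0` and every matrix `ρ`:
`(1/2^n) • ∑_{j ∈ F} S_{j,k} * ρ * S_{j,k} = ∑_{l ∈ F} ρ_{l,l} • E_{l+k, l+k}`. -/
theorem stmt_5 (hF : Fintype.card F = 2 ^ n) (b : Module.Basis (Fin n) (ZMod 2) F)
    (k : F) (hk : k ≠ 0) (ρ : Matrix F F ℂ) :
    ((1 : ℂ) / 2 ^ n) • ∑ j : F, Sop b j k * ρ * Sop b j k =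
      ∑ l : F, ρ l l • Matrix.single (l + k) (l + k) (1 : ℂ) := by
  have hchar : ∀ x : F, x + x = 0 := add_self_zero
  have haddk : ∀ x : F, x + k + k = x := by
    intro x; rw [add_assoc, hchar, add_zero]
  ext m p
  rw [Matrix.smul_apply, Matrix.sum_apply]
  -- entry of each term in the sum
  have hterm : ∀ j : F, (Sop b j k * ρ * Sop b j k) m p
      = eps (b.repr (j * (k * (m + p))) 0) * ρ (m + k) (p + k) := by
    intro j
    set A := phaseZ b (j * k) * shiftX k with hAdef
    have hA : ∀ x l : F, A x l
        = eps (b.repr (x * (j * k)) 0) * (if l = x + k then 1 else 0) := by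
      intro x l
      rw [hAdef, phaseZ, Matrix.diagonal_mul]
      rfl
    have hSop : Sop b j k * ρ * Sop b j k
        = (sFactor b j k * sFactor b j k) • (A * ρ * A) := by
      rw [Sop, ← hAdef, smul_mul_assoc, smul_mul_assoc, mul_smul_comm, smul_smul]
    rw [hSop, Matrix.smul_apply, smul_eq_mul, sFactor_sq]
    have h1 : ∀ q : F, (A * ρ) m q = eps (b.repr (m * (j * k)) 0) * ρ (m + k) q := by
      intro q
      rw [Matrix.mul_apply, Finset.sum_eq_single (m + k)]
      · rw [hA]; simp
      · intro l _ hl; rw [hA]; simp [hl]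
      · simp
    have h2 : (A * ρ * A) m p
        = eps (b.repr (m * (j * k)) 0) * ρ (m + k) (p + k)
          * eps (b.repr ((p + k) * (j * k)) 0) := by
      rw [Matrix.mul_apply, Finset.sum_eq_single (p + k)]
      · rw [h1, hA]
        have hp' : p = p + k + k := (haddk p).symm
        rw [if_pos hp', mul_one]
      · intro q _ hq
        rw [h1, hA]
        have : ¬ (p = q + k) := by
          intro h
          exact hq (by rw [h, haddk])
        rw [if_neg this, mul_zero, mul_zero]
      · simp
    rw [h2]
    have harg : j * k * k + (m * (j * k) + (p + k) * (j * k)) = j * (k * (m + p)) := by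
      linear_combination hchar (j * k * k)
    calc eps (b.repr (j * k * k) 0)
          * (eps (b.repr (m * (j * k)) 0) * ρ (m + k) (p + k)
            * eps (b.repr ((p + k) * (j * k)) 0))
        = eps (b.repr (j * k * k) 0) * eps (b.repr (m * (j * k)) 0)
          * eps (b.repr ((p + k) * (j * k)) 0) * ρ (m + k) (p + k) := by ring
      _ = eps (b.repr (j * k * k + (m * (j * k) + (p + k) * (j * k))) 0)
          * ρ (m + k) (p + k) := by
        rw [map_add, map_add, Finsupp.add_apply, Finsupp.add_apply, eps_add, eps_add]
        ring
      _ = eps (b.repr (j * (k * (m + p))) 0) * ρ (m + k) (p + k) := by rw [harg]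
  rw [Finset.sum_congr rfl fun j _ => hterm j, ← Finset.sum_mul]
  -- right-hand side entry
  rw [Matrix.sum_apply]
  have hstd : ∀ l : F, (ρ l l • Matrix.single (l + k) (l + k) (1 : ℂ)) m p
      = ρ l l * (if l + k = m ∧ l + k = p then 1 else 0) := by
    intro l
    rw [Matrix.smul_apply, smul_eq_mul, Matrix.single]
    rfl
  rw [Finset.sum_congr rfl fun l _ => hstd l]
  by_cases hmp : m = p
  · subst hmp
    have hz : ∀ j : F, eps (b.repr (j * (k * (m + m))) 0) = 1 := by
      intro j
      rw [hchar m, mul_zero, mul_zero]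
      simp [eps_zero]
    rw [Finset.sum_congr rfl fun j _ => hz j, Finset.sum_const, Finset.card_univ, hF]
    rw [Finset.sum_eq_single (m + k)]
    · rw [if_pos ⟨haddk m, haddk m⟩, mul_one]
      rw [nsmul_eq_mul, smul_eq_mul]
      have h2n : ((2 : ℂ) ^ n) ≠ 0 := pow_ne_zero n two_ne_zero
      push_cast
      field_simp
    · intro l _ hl
      have : ¬ (l + k = m ∧ l + k = m) := by
        rintro ⟨h, -⟩
        exact hl (by rw [← h, haddk])
      rw [if_neg this, mul_zero]
    · simp
  · have hc : k * (m + p) ≠ 0 := by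
      refine mul_ne_zero hk fun h => hmp ?_
      have := congrArg (· + p) h
      simp only [zero_add] at this
      rw [add_assoc, hchar, add_zero] at this
      exact this
    rw [sum_eps_mul_zero b _ hc, zero_mul, smul_zero]
    rw [Finset.sum_eq_zero]
    intro l _
    have : ¬ (l + k = m ∧ l + k = p) := by
      rintro ⟨h1, h2⟩
      exact hmp (h1 ▸ h2)
    rw [if_neg this, mul_zero]
end

section
/- Let ρ be a bipartite state on A_e × B_e and let τ be a separable bipartite state on A_s × B_s. Then the generalized robustness of entanglement is unchanged by appending τ: R(ρ ⊗ τ) = R(ρ). -/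
open scoped ComplexOrder

/-- A quantum state: positive semidefinite with trace 1. -/
def IsState {ι : Type*} [Fintype ι] (ρ : Matrix ι ι ℂ) : Prop :=
  ρ.PosSemidef ∧ ρ.trace = 1

/-- A bipartite state on `A × B` is separable if it lies in the convex hull (over `ℝ`)
of the product states. -/
def SepState {A B : Type*} [Fintype A] [Fintype B]
    (ρ : Matrix (A × B) (A × B) ℂ) : Prop :=
  ρ ∈ convexHull ℝ { M : Matrix (A × B) (A × B) ℂ |
    ∃ σ : Matrix A A ℂ, ∃ τ : Matrix B B ℂ, IsState σ ∧ IsState τ ∧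
      ∀ p q : A × B, M p q = σ p.1 q.1 * τ p.2 q.2 }

/-- The generalized robustness of entanglement of a bipartite state `ρ` on `A × B`. -/
noncomputable def robustness {A B : Type*} [Fintype A] [Fintype B]
    (ρ : Matrix (A × B) (A × B) ℂ) : ℝ :=
  sInf { l : ℝ | 0 ≤ l ∧ ∃ ω : Matrix (A × B) (A × B) ℂ, IsState ω ∧
    SepState ((1 / (1 + l)) • (ρ + l • ω)) }

/-- The tensor product of bipartite states `ρ` on `A₀ × B₀` and `σ` on `A₁ × B₁`, as a
bipartite state on `(A₀ × A₁) × (B₀ × B₁)`. -/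
def tensor2 {A₀ B₀ A₁ B₁ : Type*}
    (ρ : Matrix (A₀ × B₀) (A₀ × B₀) ℂ) (σ : Matrix (A₁ × B₁) (A₁ × B₁) ℂ) :
    Matrix ((A₀ × A₁) × (B₀ × B₁)) ((A₀ × A₁) × (B₀ × B₁)) ℂ :=
  fun p q => ρ (p.1.1, p.2.1) (q.1.1, q.2.1) * σ (p.1.2, p.2.2) (q.1.2, q.2.2)

namespace Stmt15Aux

open Matrix Kronecker

/-! ### Kronecker products of states -/

lemma kron_conjTranspose {l m p q : Type*} (M : Matrix l m ℂ) (N : Matrix p q ℂ) :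
    (M ⊗ₖ N)ᴴ = Mᴴ ⊗ₖ Nᴴ := by
  ext i j
  simp [Matrix.conjTranspose_apply, Matrix.kroneckerMap_apply, mul_comm]

lemma posSemidef_kron {α β : Type*} [Fintype α] [Fintype β]
    {M : Matrix α α ℂ} {N : Matrix β β ℂ}
    (hM : M.PosSemidef) (hN : N.PosSemidef) : (M ⊗ₖ N).PosSemidef := by
  obtain ⟨P, rfl⟩ : ∃ P : Matrix α α ℂ, M = Pᴴ * P := by
    classical
    open scoped MatrixOrder in exact CStarAlgebra.nonneg_iff_eq_star_mul_self.mp hM.nonneg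
  obtain ⟨Q, rfl⟩ : ∃ Q : Matrix β β ℂ, N = Qᴴ * Q := by
    classical
    open scoped MatrixOrder in exact CStarAlgebra.nonneg_iff_eq_star_mul_self.mp hN.nonneg
  rw [Matrix.mul_kronecker_mul, ← kron_conjTranspose]
  exact Matrix.posSemidef_conjTranspose_mul_self _

lemma isState_kron {α β : Type*} [Fintype α] [Fintype β]
    {M : Matrix α α ℂ} {N : Matrix β β ℂ}
    (hM : IsState M) (hN : IsState N) : IsState (M ⊗ₖ N) :=
  ⟨posSemidef_kron hM.1 hN.1, by rw [Matrix.trace_kronecker, hM.2, hN.2, mul_one]⟩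

/-! ### Partial traces -/

/-- Partial trace over the second factor. -/
noncomputable def ptr1 {α β : Type*} [Fintype α] [Fintype β]
    (M : Matrix (α × β) (α × β) ℂ) : Matrix α α ℂ :=
  ∑ b : β, M.submatrix (fun a => (a, b)) (fun a => (a, b))

lemma ptr1_apply {α β : Type*} [Fintype α] [Fintype β]
    (M : Matrix (α × β) (α × β) ℂ) (a a' : α) :
    ptr1 M a a' = ∑ b : β, M (a, b) (a', b) := by
  simp [ptr1, Matrix.sum_apply]

lemma ptr1_posSemidef {α β : Type*} [Fintype α] [Fintype β]
    {M : Matrix (α × β) (α × β) ℂ} (hM : M.PosSemidef) : (ptr1 M).PosSemidef :=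
  Finset.sum_induction _ _ (fun _ _ pa pb => pa.add pb) .zero
    (fun b _ => hM.submatrix _)

lemma ptr1_trace {α β : Type*} [Fintype α] [Fintype β]
    (M : Matrix (α × β) (α × β) ℂ) : (ptr1 M).trace = M.trace := by
  simp only [Matrix.trace, Matrix.diag, ptr1_apply, Fintype.sum_prod_type]

lemma trace_submatrix_equiv {m n : Type*} [Fintype m] [Fintype n]
    (e : m ≃ n) (M : Matrix n n ℂ) : (M.submatrix e e).trace = M.trace :=
  Fintype.sum_equiv e _ _ (fun _ => rfl)

variable {A B A' B' : Type*} [Fintype A] [Fintype B] [Fintype A'] [Fintype B']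

/-- Partial trace over the `A' , B'` factors of a bipartite state on
`(A × A') × (B × B')`. -/
noncomputable def pTr2 (M : Matrix ((A × A') × (B × B')) ((A × A') × (B × B')) ℂ) :
    Matrix (A × B) (A × B) ℂ :=
  ptr1 (M.submatrix (Equiv.prodProdProdComm A B A' B') (Equiv.prodProdProdComm A B A' B'))

lemma pTr2_apply (M : Matrix ((A × A') × (B × B')) ((A × A') × (B × B')) ℂ)
    (p q : A × B) :
    pTr2 M p q = ∑ st : A' × B', M ((p.1, st.1), (p.2, st.2)) ((q.1, st.1), (q.2, st.2)) := by
  simp [pTr2, ptr1_apply, Matrix.submatrix_apply, Equiv.prodProdProdComm_apply]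

lemma pTr2_posSemidef {M : Matrix ((A × A') × (B × B')) ((A × A') × (B × B')) ℂ}
    (hM : M.PosSemidef) : (pTr2 M).PosSemidef :=
  ptr1_posSemidef (hM.submatrix _)

lemma pTr2_trace (M : Matrix ((A × A') × (B × B')) ((A × A') × (B × B')) ℂ) :
    (pTr2 M).trace = M.trace := by
  rw [pTr2, ptr1_trace, trace_submatrix_equiv]

lemma isState_pTr2 {M : Matrix ((A × A') × (B × B')) ((A × A') × (B × B')) ℂ}
    (hM : IsState M) : IsState (pTr2 M) :=
  ⟨pTr2_posSemidef hM.1, by rw [pTr2_trace, hM.2]⟩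

/-! ### Separability machinery -/

def prodSet (A B : Type*) [Fintype A] [Fintype B] : Set (Matrix (A × B) (A × B) ℂ) :=
  { M : Matrix (A × B) (A × B) ℂ |
    ∃ σ : Matrix A A ℂ, ∃ τ : Matrix B B ℂ, IsState σ ∧ IsState τ ∧
      ∀ p q : A × B, M p q = σ p.1 q.1 * τ p.2 q.2 }

lemma sepState_iff {M : Matrix (A × B) (A × B) ℂ} :
    SepState M ↔ M ∈ convexHull ℝ (prodSet A B) := Iff.rfl

lemma sep_map (f : Matrix (A × B) (A × B) ℂ →ₗ[ℝ] Matrix (A' × B') (A' × B') ℂ)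
    (hf : ∀ M ∈ prodSet A B, SepState (f M))
    {M : Matrix (A × B) (A × B) ℂ} (hM : SepState M) : SepState (f M) := by
  rw [sepState_iff] at hM ⊢
  have h1 : convexHull ℝ (prodSet A B) ⊆ f ⁻¹' (convexHull ℝ (prodSet A' B')) :=
    convexHull_min (fun x hx => (hf x hx : _)) ((convex_convexHull ℝ _).linear_preimage f)
  exact h1 hM

/-- Tensoring on the right with a fixed matrix, as an `ℝ`-linear map. -/
def tensR (N : Matrix (A' × B') (A' × B') ℂ) :
    Matrix (A × B) (A × B) ℂ →ₗ[ℝ]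
      Matrix ((A × A') × (B × B')) ((A × A') × (B × B')) ℂ where
  toFun M := tensor2 M N
  map_add' M M' := by ext p q; simp [tensor2, Matrix.add_apply, add_mul]
  map_smul' c M := by
    ext p q
    simp only [tensor2, Matrix.smul_apply, RingHom.id_apply, Complex.real_smul]
    ring

/-- Tensoring on the left with a fixed matrix, as an `ℝ`-linear map. -/
def tensL (M : Matrix (A × B) (A × B) ℂ) :
    Matrix (A' × B') (A' × B') ℂ →ₗ[ℝ]
      Matrix ((A × A') × (B × B')) ((A × A') × (B × B')) ℂ where
  toFun N := tensor2 M N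
  map_add' N N' := by ext p q; simp [tensor2, Matrix.add_apply, mul_add]
  map_smul' c N := by
    ext p q
    simp only [tensor2, Matrix.smul_apply, RingHom.id_apply, Complex.real_smul]
    ring

/-- The partial trace as an `ℝ`-linear map. -/
noncomputable def pTr2L :
    Matrix ((A × A') × (B × B')) ((A × A') × (B × B')) ℂ →ₗ[ℝ]
      Matrix (A × B) (A × B) ℂ where
  toFun := pTr2
  map_add' M M' := by
    ext p q
    simp [pTr2_apply, Matrix.add_apply, Finset.sum_add_distrib]
  map_smul' c M := by
    ext p q
    simp [pTr2_apply, Matrix.smul_apply, Finset.smul_sum]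

lemma prod_tensor2 {P : Matrix (A × B) (A × B) ℂ} {Q : Matrix (A' × B') (A' × B') ℂ}
    (hP : P ∈ prodSet A B) (hQ : Q ∈ prodSet A' B') :
    tensor2 P Q ∈ prodSet (A × A') (B × B') := by
  obtain ⟨σ₀, τ₀, hσ₀, hτ₀, hP5⟩ := hP
  obtain ⟨σ₁, τ₁, hσ₁, hτ₁, hQ5⟩ := hQ
  refine ⟨σ₀ ⊗ₖ σ₁, τ₀ ⊗ₖ τ₁, isState_kron hσ₀ hσ₁, isState_kron hτ₀ hτ₁, fun p q => ?_⟩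
  rw [tensor2, hP5, hQ5]
  simp only [Matrix.kroneckerMap_apply]
  ring

lemma prod_pTr2 {M : Matrix ((A × A') × (B × B')) ((A × A') × (B × B')) ℂ}
    (hM : M ∈ prodSet (A × A') (B × B')) : pTr2 M ∈ prodSet A B := by
  obtain ⟨σ, τ', hσ, hτ', hM5⟩ := hM
  refine ⟨ptr1 σ, ptr1 τ',
    ⟨ptr1_posSemidef hσ.1, by rw [ptr1_trace, hσ.2]⟩,
    ⟨ptr1_posSemidef hτ'.1, by rw [ptr1_trace, hτ'.2]⟩, fun p q => ?_⟩
  rw [pTr2_apply]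
  simp only [hM5]
  rw [Fintype.sum_prod_type, ptr1_apply, ptr1_apply, Finset.sum_mul_sum]

lemma sep_tensor2 {M : Matrix (A × B) (A × B) ℂ} {N : Matrix (A' × B') (A' × B') ℂ}
    (hM : SepState M) (hN : SepState N) : SepState (tensor2 M N) := by
  have inner : ∀ P ∈ prodSet A B, SepState (tensor2 P N) := fun P hP =>
    sep_map (tensL P)
      (fun Q hQ => subset_convexHull ℝ _ (prod_tensor2 hP hQ)) hN
  exact sep_map (tensR N) inner hM

lemma sep_pTr2 {M : Matrix ((A × A') × (B × B')) ((A × A') × (B × B')) ℂ}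
    (hM : SepState M) : SepState (pTr2 M) :=
  sep_map pTr2L (fun P hP => subset_convexHull ℝ _ (prod_pTr2 hP)) hM

lemma isState_tensor2 {M : Matrix (A × B) (A × B) ℂ} {N : Matrix (A' × B') (A' × B') ℂ}
    (hM : IsState M) (hN : IsState N) : IsState (tensor2 M N) := by
  have heq : tensor2 M N =
      (M ⊗ₖ N).submatrix (Equiv.prodProdProdComm A A' B B')
        (Equiv.prodProdProdComm A A' B B') := by
    ext p q
    simp [tensor2, Matrix.submatrix_apply, Equiv.prodProdProdComm_apply,
      Matrix.kroneckerMap_apply]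
  constructor
  · rw [heq]
    exact (posSemidef_kron hM.1 hN.1).submatrix _
  · rw [heq, trace_submatrix_equiv, Matrix.trace_kronecker, hM.2, hN.2, mul_one]

lemma pTr2_tensor2 {M : Matrix (A × B) (A × B) ℂ} {N : Matrix (A' × B') (A' × B') ℂ}
    (hN : N.trace = 1) : pTr2 (tensor2 M N) = M := by
  ext p q
  rw [pTr2_apply]
  simp only [tensor2, Prod.mk.eta]
  rw [← Finset.mul_sum]
  have ht : ∑ st : A' × B', N st st = 1 := by
    simpa [Matrix.trace, Matrix.diag] using hN
  rw [ht, mul_one]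

end Stmt15Aux

/-- Appending a separable bipartite state `τ` does not change the
generalized robustness of entanglement: `R(ρ ⊗ τ) = R(ρ)`. -/
theorem stmt_15 (Aₑ Bₑ Aₛ Bₛ : Type*)
    [Fintype Aₑ] [Fintype Bₑ] [Fintype Aₛ] [Fintype Bₛ]
    [Nonempty Aₑ] [Nonempty Bₑ] [Nonempty Aₛ] [Nonempty Bₛ]
    (ρ : Matrix (Aₑ × Bₑ) (Aₑ × Bₑ) ℂ) (hρ : IsState ρ)
    (τ : Matrix (Aₛ × Bₛ) (Aₛ × Bₛ) ℂ) (hτ : IsState τ) (hsep : SepState τ) :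
    robustness (tensor2 ρ τ) = robustness ρ := by
  unfold robustness
  congr 1
  ext l
  simp only [Set.mem_setOf_eq]
  constructor
  · rintro ⟨hl, ω, hω, hsep'⟩
    refine ⟨hl, Stmt15Aux.pTr2 ω, Stmt15Aux.isState_pTr2 hω, ?_⟩
    have h := Stmt15Aux.sep_pTr2 hsep'
    have heq : Stmt15Aux.pTr2 ((1 / (1 + l)) • (tensor2 ρ τ + l • ω)) =
        (1 / (1 + l)) • (ρ + l • Stmt15Aux.pTr2 ω) := by
      show Stmt15Aux.pTr2L ((1 / (1 + l)) • (tensor2 ρ τ + l • ω)) = _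
      rw [map_smul, map_add, map_smul,
        show Stmt15Aux.pTr2L (tensor2 ρ τ) = ρ from Stmt15Aux.pTr2_tensor2 hτ.2]
      rfl
    rwa [heq] at h
  · rintro ⟨hl, ω, hω, hsep'⟩
    refine ⟨hl, tensor2 ω τ, Stmt15Aux.isState_tensor2 hω hτ, ?_⟩
    have heq : (1 / (1 + l)) • (tensor2 ρ τ + l • tensor2 ω τ) =
        tensor2 ((1 / (1 + l)) • (ρ + l • ω)) τ := by
      ext p q
      simp only [tensor2, Matrix.smul_apply, Matrix.add_apply, Complex.real_smul,
        one_div, mul_add]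
      ring
    rw [heq]
    exact Stmt15Aux.sep_tensor2 hsep' hsep
end

section
/- Let ρ be a bipartite state on A_e × B_e with |A_e| = |B_e| = 2^{n_e} and R(ρ) ≤ 2^{n_e} − 1, and let τ be a separable bipartite state on A_s × B_s with |A_s| = |B_s| = 2^{n_s}; set n := n_e + n_s. Then the advantage of a single joint cut with the composite state over a cut with ρ together with an entanglement-free cut satisfies (2^{n_e+1}/(R(ρ)+1) − 1) · (2^{n_s+1} − 1) − (2^{n+1}/(R(ρ ⊗ τ)+1) − 1) = (2^{n_e+1}/(R(ρ)+1) − 1 − 1) · (2^{n_s} − 1), and this quantity is nonnegative. -/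
open scoped ComplexOrder

/-! ### Auxiliary material -/

open Matrix Kronecker

section Aux

lemma Stmt17.kron_conjT {X Y : Type*} (A : Matrix X X ℂ) (B : Matrix Y Y ℂ) :
    (A ⊗ₖ B)ᴴ = Aᴴ ⊗ₖ Bᴴ := by
  ext p q
  simp [Matrix.conjTranspose_apply, Matrix.kroneckerMap_apply, mul_comm]

lemma Stmt17.posSemidef_kron {X Y : Type*} [Fintype X] [Fintype Y]
    {A : Matrix X X ℂ} {B : Matrix Y Y ℂ} (hA : A.PosSemidef) (hB : B.PosSemidef) :
    (A ⊗ₖ B).PosSemidef := by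
  classical
  exact hA.kronecker hB

lemma Stmt17.isState_kron {X Y : Type*} [Fintype X] [Fintype Y]
    {A : Matrix X X ℂ} {B : Matrix Y Y ℂ} (hA : IsState A) (hB : IsState B) :
    IsState (A ⊗ₖ B) :=
  ⟨Stmt17.posSemidef_kron hA.1 hB.1,
    by rw [Matrix.trace_kronecker, hA.2, hB.2, mul_one]⟩

/-- Partial trace over the second factor. -/
noncomputable def Stmt17.ptr {X Y : Type*} [Fintype Y]
    (M : Matrix (X × Y) (X × Y) ℂ) : Matrix X X ℂ :=
  fun p q => ∑ y : Y, M (p, y) (q, y)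

lemma Stmt17.isState_ptr {X Y : Type*} [Fintype X] [Fintype Y]
    {M : Matrix (X × Y) (X × Y) ℂ} (h : IsState M) : IsState (Stmt17.ptr M) := by
  classical
  refine ⟨Matrix.PosSemidef.of_dotProduct_mulVec_nonneg ?_ ?_, ?_⟩
  · ext p q
    simp only [Matrix.conjTranspose_apply, Stmt17.ptr, star_sum]
    exact Finset.sum_congr rfl fun y _ => h.1.1.apply (p, y) (q, y)
  · intro v
    have h1 : star v ⬝ᵥ (Stmt17.ptr M) *ᵥ v =
        ∑ p : X, ∑ y : Y, ∑ q : X, star (v p) * (M (p, y) (q, y) * v q) := by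
      simp only [dotProduct, Matrix.mulVec, Stmt17.ptr, Pi.star_apply,
        Finset.sum_mul, Finset.mul_sum]
      exact Finset.sum_congr rfl fun p _ => Finset.sum_comm
    have h2 : star v ⬝ᵥ (Stmt17.ptr M) *ᵥ v =
        ∑ y : Y, ∑ p : X, ∑ q : X, star (v p) * (M (p, y) (q, y) * v q) := by
      rw [h1]; exact Finset.sum_comm
    have h3 : ∀ y : Y,
        star (fun p : X × Y => if p.2 = y then v p.1 else 0) ⬝ᵥ
          M *ᵥ (fun p : X × Y => if p.2 = y then v p.1 else 0) =
        ∑ p : X, ∑ q : X, star (v p) * (M (p, y) (q, y) * v q) := by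
      intro y
      simp only [dotProduct, Matrix.mulVec, Pi.star_apply, Fintype.sum_prod_type,
        apply_ite (star : ℂ → ℂ), star_zero, ite_mul, mul_ite, mul_zero, zero_mul,
        Finset.sum_ite_eq, Finset.sum_ite_eq', Finset.mem_univ, if_true, Finset.mul_sum]
      refine Finset.sum_congr rfl fun p _ => ?_
      rw [Finset.sum_comm]
      refine Finset.sum_congr rfl fun q _ => ?_
      simp
    rw [h2]
    refine Finset.sum_nonneg fun y _ => ?_
    rw [← h3 y]
    exact h.1.dotProduct_mulVec_nonneg _
  · rw [← h.2, Matrix.trace, Matrix.trace]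
    simp [Stmt17.ptr, Matrix.diag, Fintype.sum_prod_type]

variable {A₀ B₀ A₁ B₁ : Type*} [Fintype A₀] [Fintype B₀] [Fintype A₁] [Fintype B₁]

/-- Partial trace of a `(A₀ × A₁) : (B₀ × B₁)` bipartite matrix down to `A₀ : B₀`. -/
noncomputable def Stmt17.pt2
    (M : Matrix ((A₀ × A₁) × (B₀ × B₁)) ((A₀ × A₁) × (B₀ × B₁)) ℂ) :
    Matrix (A₀ × B₀) (A₀ × B₀) ℂ :=
  fun p q => ∑ c : A₁ × B₁, M ((p.1, c.1), (p.2, c.2)) ((q.1, c.1), (q.2, c.2))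

/-- The shuffle equivalence. -/
def Stmt17.sh : ((A₀ × A₁) × (B₀ × B₁)) ≃ ((A₀ × B₀) × (A₁ × B₁)) where
  toFun x := ((x.1.1, x.2.1), (x.1.2, x.2.2))
  invFun y := ((y.1.1, y.2.1), (y.1.2, y.2.2))
  left_inv _ := rfl
  right_inv _ := rfl

lemma Stmt17.pt2_eq (M : Matrix ((A₀ × A₁) × (B₀ × B₁)) ((A₀ × A₁) × (B₀ × B₁)) ℂ) :
    Stmt17.pt2 M = Stmt17.ptr (M.submatrix (Stmt17.sh.symm) (Stmt17.sh.symm)) := rfl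

lemma Stmt17.isState_pt2
    {M : Matrix ((A₀ × A₁) × (B₀ × B₁)) ((A₀ × A₁) × (B₀ × B₁)) ℂ} (h : IsState M) :
    IsState (Stmt17.pt2 M) := by
  rw [Stmt17.pt2_eq]
  refine Stmt17.isState_ptr ⟨h.1.submatrix _, ?_⟩
  rw [← h.2, Matrix.trace, Matrix.trace]
  exact Fintype.sum_equiv Stmt17.sh.symm _ _ (fun i => rfl)

/-- `pt2` as an `ℝ`-linear map. -/
noncomputable def Stmt17.pt2L :
    Matrix ((A₀ × A₁) × (B₀ × B₁)) ((A₀ × A₁) × (B₀ × B₁)) ℂ →ₗ[ℝ]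
      Matrix (A₀ × B₀) (A₀ × B₀) ℂ where
  toFun := Stmt17.pt2
  map_add' M N := by ext p q; simp [Stmt17.pt2, Finset.sum_add_distrib]
  map_smul' r M := by ext p q; simp [Stmt17.pt2, Finset.smul_sum]

/-- `tensor2 · y` as an `ℝ`-linear map. -/
def Stmt17.tenRL (y : Matrix (A₁ × B₁) (A₁ × B₁) ℂ) :
    Matrix (A₀ × B₀) (A₀ × B₀) ℂ →ₗ[ℝ]
      Matrix ((A₀ × A₁) × (B₀ × B₁)) ((A₀ × A₁) × (B₀ × B₁)) ℂ where
  toFun x := tensor2 x y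
  map_add' M N := by ext p q; simp [tensor2, add_mul]
  map_smul' r M := by
    ext p q
    simp [tensor2, Matrix.smul_apply, Complex.real_smul]
    ring

/-- `tensor2 x ·` as an `ℝ`-linear map. -/
def Stmt17.tenLL (x : Matrix (A₀ × B₀) (A₀ × B₀) ℂ) :
    Matrix (A₁ × B₁) (A₁ × B₁) ℂ →ₗ[ℝ]
      Matrix ((A₀ × A₁) × (B₀ × B₁)) ((A₀ × A₁) × (B₀ × B₁)) ℂ where
  toFun y := tensor2 x y
  map_add' M N := by ext p q; simp [tensor2, mul_add]
  map_smul' r M := by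
    ext p q
    simp [tensor2, Matrix.smul_apply, Complex.real_smul]
    ring

/-- Mapping a convex hull through a linear map sending generators into a hull. -/
lemma Stmt17.hull_map {E F : Type*} [AddCommGroup E] [Module ℝ E]
    [AddCommGroup F] [Module ℝ F] (L : E →ₗ[ℝ] F) {P₁ : Set E} {P₂ : Set F}
    (h : ∀ x ∈ P₁, L x ∈ convexHull ℝ P₂) {M : E} (hM : M ∈ convexHull ℝ P₁) :
    L M ∈ convexHull ℝ P₂ := by
  have h1 : L M ∈ convexHull ℝ (L '' P₁) := by
    rw [← L.image_convexHull]
    exact Set.mem_image_of_mem L hM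
  refine convexHull_min ?_ (convex_convexHull ℝ P₂) h1
  rintro _ ⟨x, hx, rfl⟩
  exact h x hx

/-- Partial trace preserves separability. -/
lemma Stmt17.sep_pt2
    {M : Matrix ((A₀ × A₁) × (B₀ × B₁)) ((A₀ × A₁) × (B₀ × B₁)) ℂ}
    (h : SepState M) : SepState (Stmt17.pt2 M) := by
  refine Stmt17.hull_map Stmt17.pt2L ?_ h
  rintro x ⟨σ, τ, hσ, hτ, hx⟩
  refine subset_convexHull ℝ _ ?_
  refine ⟨Stmt17.ptr σ, Stmt17.ptr τ, Stmt17.isState_ptr hσ, Stmt17.isState_ptr hτ, ?_⟩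
  intro p q
  show Stmt17.pt2 x p q = _
  simp only [Stmt17.pt2, hx, Stmt17.ptr]
  rw [Fintype.sum_prod_type, Finset.sum_mul_sum]

/-- Tensor product preserves separability. -/
lemma Stmt17.sep_tensor2
    {M₁ : Matrix (A₀ × B₀) (A₀ × B₀) ℂ} {M₂ : Matrix (A₁ × B₁) (A₁ × B₁) ℂ}
    (h₁ : SepState M₁) (h₂ : SepState M₂) : SepState (tensor2 M₁ M₂) := by
  refine Stmt17.hull_map (Stmt17.tenRL M₂) ?_ h₁
  rintro x ⟨σ, τ, hσ, hτ, hx⟩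
  show SepState (tensor2 x M₂)
  refine Stmt17.hull_map (Stmt17.tenLL x) ?_ h₂
  rintro y ⟨σ', τ', hσ', hτ', hy⟩
  refine subset_convexHull ℝ _ ?_
  refine ⟨σ ⊗ₖ σ', τ ⊗ₖ τ', Stmt17.isState_kron hσ hσ', Stmt17.isState_kron hτ hτ', ?_⟩
  intro p q
  show tensor2 x y p q = _
  simp only [tensor2, hx, hy, Matrix.kroneckerMap_apply]
  ring

lemma Stmt17.pt2_tensor2 {ρ : Matrix (A₀ × B₀) (A₀ × B₀) ℂ}
    {τ : Matrix (A₁ × B₁) (A₁ × B₁) ℂ} (hτ : τ.trace = 1) :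
    Stmt17.pt2 (tensor2 ρ τ) = ρ := by
  ext p q
  have : Stmt17.pt2 (tensor2 ρ τ) p q = ρ p q * τ.trace := by
    simp only [Stmt17.pt2, tensor2, Matrix.trace, Matrix.diag, Finset.mul_sum]
  rw [this, hτ, mul_one]

end Aux

/-- For a bipartite state `ρ` on `A_e × B_e` with
`|A_e| = |B_e| = 2^{n_e}` and `R(ρ) ≤ 2^{n_e} − 1`, and a separable bipartite state `τ`
on `A_s × B_s` with `|A_s| = |B_s| = 2^{n_s}`, setting `n := n_e + n_s`:
`(2^{n_e+1}/(R(ρ)+1) − 1)(2^{n_s+1} − 1) − (2^{n+1}/(R(ρ⊗τ)+1) − 1)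
  = (2^{n_e+1}/(R(ρ)+1) − 1 − 1)(2^{n_s} − 1)`, and this quantity is nonnegative. -/
theorem stmt_17 (nₑ nₛ n : ℕ) (hn : n = nₑ + nₛ)
    (Aₑ Bₑ Aₛ Bₛ : Type*) [Fintype Aₑ] [Fintype Bₑ] [Fintype Aₛ] [Fintype Bₛ]
    (hAe : Fintype.card Aₑ = 2 ^ nₑ) (hBe : Fintype.card Bₑ = 2 ^ nₑ)
    (hAs : Fintype.card Aₛ = 2 ^ nₛ) (hBs : Fintype.card Bₛ = 2 ^ nₛ)
    (ρ : Matrix (Aₑ × Bₑ) (Aₑ × Bₑ) ℂ) (hρ : IsState ρ)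
    (hRρ : robustness ρ ≤ (2 : ℝ) ^ nₑ - 1)
    (τ : Matrix (Aₛ × Bₛ) (Aₛ × Bₛ) ℂ) (hτ : IsState τ) (hsep : SepState τ) :
    ((2 : ℝ) ^ (nₑ + 1) / (robustness ρ + 1) - 1) * ((2 : ℝ) ^ (nₛ + 1) - 1) -
        ((2 : ℝ) ^ (n + 1) / (robustness (tensor2 ρ τ) + 1) - 1) =
      ((2 : ℝ) ^ (nₑ + 1) / (robustness ρ + 1) - 1 - 1) * ((2 : ℝ) ^ nₛ - 1) ∧
    0 ≤ ((2 : ℝ) ^ (nₑ + 1) / (robustness ρ + 1) - 1 - 1) * ((2 : ℝ) ^ nₛ - 1) := by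
  -- the robustness of `ρ ⊗ τ` equals that of `ρ`
  have hsets : { l : ℝ | 0 ≤ l ∧ ∃ ω, IsState ω ∧
        SepState ((1 / (1 + l)) • (tensor2 ρ τ + l • ω)) } =
      { l : ℝ | 0 ≤ l ∧ ∃ ω, IsState ω ∧
        SepState ((1 / (1 + l)) • (ρ + l • ω)) } := by
    ext l
    simp only [Set.mem_setOf_eq]
    constructor
    · rintro ⟨hl, Ω, hΩ, hΩsep⟩
      refine ⟨hl, Stmt17.pt2 Ω, Stmt17.isState_pt2 hΩ, ?_⟩
      have := Stmt17.sep_pt2 hΩsep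
      have heq : Stmt17.pt2 ((1 / (1 + l)) • (tensor2 ρ τ + l • Ω)) =
          (1 / (1 + l)) • (ρ + l • Stmt17.pt2 Ω) := by
        have h1 : ∀ (r : ℝ)
            (M : Matrix ((Aₑ × Aₛ) × (Bₑ × Bₛ)) ((Aₑ × Aₛ) × (Bₑ × Bₛ)) ℂ),
            Stmt17.pt2 (r • M) = r • Stmt17.pt2 M :=
          fun r M => Stmt17.pt2L.map_smul r M
        have h2 : ∀ (M N : Matrix ((Aₑ × Aₛ) × (Bₑ × Bₛ)) ((Aₑ × Aₛ) × (Bₑ × Bₛ)) ℂ),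
            Stmt17.pt2 (M + N) = Stmt17.pt2 M + Stmt17.pt2 N :=
          fun M N => Stmt17.pt2L.map_add M N
        rw [h1, h2, h1, Stmt17.pt2_tensor2 hτ.2]
      rwa [heq] at this
    · rintro ⟨hl, ω, hω, hωsep⟩
      refine ⟨hl, tensor2 ω τ, ?_, ?_⟩
      · constructor
        · have : (tensor2 ω τ) = (ω ⊗ₖ τ).submatrix Stmt17.sh Stmt17.sh := rfl
          rw [this]
          exact (Stmt17.posSemidef_kron hω.1 hτ.1).submatrix _
        · have : (tensor2 ω τ).trace = (ω ⊗ₖ τ).trace := by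
            rw [Matrix.trace, Matrix.trace]
            exact Fintype.sum_equiv Stmt17.sh _ _ (fun i => rfl)
          rw [this, Matrix.trace_kronecker, hω.2, hτ.2, mul_one]
      · have heq : (1 / (1 + l)) • (tensor2 ρ τ + l • tensor2 ω τ) =
            tensor2 ((1 / (1 + l)) • (ρ + l • ω)) τ := by
          ext p q
          simp only [tensor2, Matrix.smul_apply, Matrix.add_apply, Complex.real_smul]
          ring
        rw [heq]
        exact Stmt17.sep_tensor2 hωsep hsep
  have hreq : robustness (tensor2 ρ τ) = robustness ρ := by
    unfold robustness
    rw [hsets]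
  have hR0 : 0 ≤ robustness ρ := Real.sInf_nonneg fun x hx => hx.1
  set R := robustness ρ with hRdef
  have hpos : (0 : ℝ) < R + 1 := by linarith
  have hne : R + 1 ≠ 0 := ne_of_gt hpos
  have hs1 : (1 : ℝ) ≤ (2 : ℝ) ^ nₛ := one_le_pow₀ (by norm_num)
  constructor
  · rw [hreq, hn, show nₑ + nₛ + 1 = (nₑ + 1) + nₛ by ring, pow_add]
    have h2s : (2 : ℝ) ^ (nₛ + 1) = 2 * 2 ^ nₛ := by ring
    rw [h2s]
    field_simp
    ring
  · refine mul_nonneg ?_ (by linarith)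
    have h2 : (2 : ℝ) * (R + 1) ≤ 2 ^ (nₑ + 1) := by
      have : (2 : ℝ) ^ (nₑ + 1) = 2 * 2 ^ nₑ := by ring
      rw [this]
      linarith
    have := (le_div_iff₀ hpos).mpr h2
    linarith
end

section
/- Let m ≥ 2, let k : Fin m → ℕ with k_i ≥ 1, and let r : Fin m → ℝ satisfy 0 ≤ r_i < 2^{k_i} − 1 for all i. Then ∏_{i} (2^{k_i+1}/(r_i+1) − 1) > 2^{(∑_i k_i)+1} / (∏_i (r_i+1)) − 1. -/
/-!
Put `a i = 2^(k i + 1) / (r i + 1) - 1`; the bound on `r i` says exactly that `a i > 1`, and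
`∏ (a i + 1) = 2^(∑ k i + m) / ∏ (r i + 1)`. The theorem is therefore the case `s = Fin m` of
`2 ∏ (a i + 1) < 2^#s (∏ a i + 1)` for `#s ≥ 2` and all `a i > 1`, which follows by induction
from the two-factor case `(a + 1)(b + 1) ≤ 2(ab + 1)`, i.e. `0 ≤ (a - 1)(b - 1)`.
-/

open Finset

section OrderedRing

variable {R : Type*} [CommRing R] [LinearOrder R] [IsStrictOrderedRing R]

theorem add_one_mul_add_one_le_two_mul {a b : R} (ha : 1 ≤ a) (hb : 1 ≤ b) :
    (a + 1) * (b + 1) ≤ 2 * (a * b + 1) := by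
  nlinarith [mul_nonneg (sub_nonneg.2 ha) (sub_nonneg.2 hb)]

theorem add_one_mul_add_one_lt_two_mul {a b : R} (ha : 1 < a) (hb : 1 < b) :
    (a + 1) * (b + 1) < 2 * (a * b + 1) := by
  nlinarith [mul_pos (sub_pos.2 ha) (sub_pos.2 hb)]

variable {ι : Type*} {a : ι → R}

theorem Finset.two_mul_prod_add_one_le (s : Finset ι) (ha : ∀ i ∈ s, 1 ≤ a i) :
    2 * ∏ i ∈ s, (a i + 1) ≤ 2 ^ #s * (∏ i ∈ s, a i + 1) := by
  induction s using Finset.cons_induction with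
  | empty => norm_num
  | cons i s hi ih =>
    have hai : 1 ≤ a i := ha i (mem_cons_self i s)
    have has : ∀ j ∈ s, 1 ≤ a j := fun j hj => ha j (mem_cons_of_mem hj)
    rw [prod_cons, prod_cons, card_cons]
    calc 2 * ((a i + 1) * ∏ j ∈ s, (a j + 1))
        = (a i + 1) * (2 * ∏ j ∈ s, (a j + 1)) := by ring
      _ ≤ (a i + 1) * (2 ^ #s * (∏ j ∈ s, a j + 1)) :=
        mul_le_mul_of_nonneg_left (ih has) (by linarith)
      _ = 2 ^ #s * ((a i + 1) * (∏ j ∈ s, a j + 1)) := by ring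
      _ ≤ 2 ^ #s * (2 * (a i * ∏ j ∈ s, a j + 1)) :=
        mul_le_mul_of_nonneg_left (add_one_mul_add_one_le_two_mul hai (one_le_prod has))
          (by positivity)
      _ = 2 ^ (#s + 1) * (a i * ∏ j ∈ s, a j + 1) := by ring

theorem Finset.two_mul_prod_add_one_lt [DecidableEq ι] {s : Finset ι} (hs : 2 ≤ #s)
    (ha : ∀ i ∈ s, 1 < a i) :
    2 * ∏ i ∈ s, (a i + 1) < 2 ^ #s * (∏ i ∈ s, a i + 1) := by
  obtain ⟨i, hi⟩ : s.Nonempty := card_pos.1 (by omega)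
  set t := s.erase i
  have hcard : #s = #t + 1 := (card_erase_add_one hi).symm
  have hat : ∀ j ∈ t, 1 < a j := fun j hj => ha j (mem_of_mem_erase hj)
  have ht : t.Nonempty := card_pos.1 (by omega)
  have hprod : 1 < ∏ j ∈ t, a j := by
    simpa using prod_lt_prod_of_nonempty (fun _ _ => one_pos) hat ht
  rw [← mul_prod_erase s _ hi, ← mul_prod_erase s _ hi, hcard]
  calc 2 * ((a i + 1) * ∏ j ∈ t, (a j + 1))
      = (a i + 1) * (2 * ∏ j ∈ t, (a j + 1)) := by ring
    _ ≤ (a i + 1) * (2 ^ #t * (∏ j ∈ t, a j + 1)) :=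
      mul_le_mul_of_nonneg_left (t.two_mul_prod_add_one_le fun j hj => (hat j hj).le)
        (by linarith [ha i hi])
    _ = 2 ^ #t * ((a i + 1) * (∏ j ∈ t, a j + 1)) := by ring
    _ < 2 ^ #t * (2 * (a i * ∏ j ∈ t, a j + 1)) :=
      mul_lt_mul_of_pos_left (add_one_mul_add_one_lt_two_mul (ha i hi) hprod) (by positivity)
    _ = 2 ^ (#t + 1) * (a i * ∏ j ∈ t, a j + 1) := by ring

end OrderedRing

theorem stmt_19_general (m : ℕ) (hm : 2 ≤ m) (k : Fin m → ℕ)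
    (r : Fin m → ℝ) (hr0 : ∀ i, 0 ≤ r i) (hr1 : ∀ i, r i < (2 : ℝ) ^ k i - 1) :
    ∏ i, ((2 : ℝ) ^ (k i + 1) / (r i + 1) - 1) >
      (2 : ℝ) ^ ((∑ i, k i) + 1) / (∏ i, (r i + 1)) - 1 := by
  have hr : ∀ i, 0 < r i + 1 := fun i => by linarith [hr0 i]
  set a : Fin m → ℝ := fun i => 2 ^ (k i + 1) / (r i + 1) - 1
  have ha : ∀ i ∈ univ, 1 < a i := fun i _ => by
    have : 2 < (2 : ℝ) ^ (k i + 1) / (r i + 1) := by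
      rw [lt_div_iff₀ (hr i), pow_succ]; linarith [hr1 i]
    simp only [a]; linarith
  have hprod : 2 * ∏ i, (a i + 1) = 2 ^ m * (2 ^ ((∑ i, k i) + 1) / ∏ i, (r i + 1)) := by
    simp only [a, sub_add_cancel]
    rw [prod_div_distrib, prod_pow_eq_pow_sum, sum_add_distrib, sum_const, card_univ,
      Fintype.card_fin, smul_eq_mul, mul_one]
    ring
  have key := univ.two_mul_prod_add_one_lt (by simpa using hm) ha
  rw [hprod, card_univ, Fintype.card_fin] at key
  have hlt := lt_of_mul_lt_mul_left key (by positivity)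
  simp only [a] at hlt
  linarith

/-- For `m ≥ 2`, `k : Fin m → ℕ` with `k_i ≥ 1`, and `r : Fin m → ℝ`
with `0 ≤ r_i < 2^{k_i} − 1` for all `i`:
`∏_i (2^{k_i+1}/(r_i+1) − 1) > 2^{(∑_i k_i)+1} / ∏_i (r_i+1) − 1`. -/
theorem stmt_19 (m : ℕ) (hm : 2 ≤ m) (k : Fin m → ℕ) (hk : ∀ i, 1 ≤ k i)
    (r : Fin m → ℝ) (hr0 : ∀ i, 0 ≤ r i) (hr1 : ∀ i, r i < (2 : ℝ) ^ k i - 1) :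
    ∏ i, ((2 : ℝ) ^ (k i + 1) / (r i + 1) - 1) >
      (2 : ℝ) ^ ((∑ i, k i) + 1) / (∏ i, (r i + 1)) - 1 :=
  stmt_19_general m hm k r hr0 hr1
end
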